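/- arXiv:2205.06847 — 6 statements merged into one kernel-verified Lean document; each statement's English description precedes it below -/
import Mathlib

section
/- Let P be a monic real polynomial of degree 2N (N ≥ 1) that is palindromic, i.e., coeff(j) = coeff(2N − j) for all 0 ≤ j ≤ 2N, and suppose every non-real complex root of P has modulus 1. Then there exist real numbers p(1), …, p(N) such that P(x) = ∏_{k=1}^{N} (x² + p(k)·x + 1). -/
open Polynomial

lemma eval_reverse_mul_pow {K : Type*} [Field K] (f : K[X]) {x : K} (hx : x ≠ 0) :
    (reverse f).eval x⁻¹ * x ^ f.natDegree = f.eval x := by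
  letI := invertibleOfNonzero hx
  have := Polynomial.eval₂_reverse_mul_pow (RingHom.id K) x f
  simpa only [invOf_eq_inv, eval₂_id] using this

lemma root_inv_of_reverse {K : Type*} [Field K] {f : K[X]} (hrev : f.reverse = f)
    {x : K} (hx : x ≠ 0) (hroot : f.eval x = 0) : f.eval x⁻¹ = 0 := by
  have h := eval_reverse_mul_pow f hx
  rw [hrev, hroot] at h
  exact (mul_eq_zero.mp h).resolve_right (pow_ne_zero _ hx)

lemma coeff_zero_of_reverse {K : Type*} [Field K] {f : K[X]} (hm : f.Monic)
    (hrev : f.reverse = f) : f.coeff 0 = 1 := by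
  have h : (reverse f).coeff 0 = f.coeff 0 := by rw [hrev]
  rw [coeff_reverse, revAt_le (Nat.zero_le _), Nat.sub_zero] at h
  rw [← h]; exact hm

lemma reverse_pow' {R : Type*} [CommRing R] [IsDomain R] (f : R[X]) (n : ℕ) :
    reverse (f ^ n) = (reverse f) ^ n := by
  induction n with
  | zero => simpa using reverse_C (1 : R)
  | succ n ih => rw [pow_succ, pow_succ, Polynomial.reverse_mul_of_domain, ih]

lemma quad_monic (p : ℝ) : (X ^ 2 + C p * X + 1 : ℝ[X]).Monic := by
  have h : (C p * X + 1 : ℝ[X]).degree < (2 : ℕ) := by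
    apply lt_of_le_of_lt (degree_add_le _ _)
    simp only [max_lt_iff]
    exact ⟨lt_of_le_of_lt (degree_C_mul_X_le _) (by norm_num),
      lt_of_le_of_lt degree_one_le (by norm_num)⟩
  have := Polynomial.monic_X_pow_add (n := 2) h
  simpa [add_assoc] using this

lemma quad_natDegree (p : ℝ) : (X ^ 2 + C p * X + 1 : ℝ[X]).natDegree = 2 := by
  have h : (C p * X + 1 : ℝ[X]).degree < (2 : ℕ) := by
    apply lt_of_le_of_lt (degree_add_le _ _)
    simp only [max_lt_iff]
    exact ⟨lt_of_le_of_lt (degree_C_mul_X_le _) (by norm_num),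
      lt_of_le_of_lt degree_one_le (by norm_num)⟩
  have h2 : (X ^ 2 + C p * X + 1 : ℝ[X]).degree = 2 := by
    rw [add_assoc, degree_add_eq_left_of_degree_lt (by rw [degree_X_pow]; exact_mod_cast h),
      degree_X_pow]
    norm_cast
  exact natDegree_eq_of_degree_eq_some h2

lemma quad_reverse (p : ℝ) : reverse (X ^ 2 + C p * X + 1 : ℝ[X]) = X ^ 2 + C p * X + 1 := by
  have hd := quad_natDegree p
  unfold Polynomial.reverse
  rw [hd]
  have h : (X ^ 2 + C p * X + 1 : ℝ[X]) = X ^ 2 + C p * X ^ 1 + C 1 * X ^ 0 := by simp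
  rw [h]
  simp only [reflect_add, reflect_C_mul_X_pow, reflect_monomial]
  norm_num [revAt_le]
  ring

lemma linear_reverse (r : ℝ) (hr : r ^ 2 = 1) :
    reverse (X - C r : ℝ[X]) = C (-r) * (X - C r) := by
  have hr0 : r ≠ 0 := by intro h; rw [h] at hr; norm_num at hr
  have hd : (X - C r : ℝ[X]).natDegree = 1 := natDegree_X_sub_C r
  unfold Polynomial.reverse
  rw [hd]
  have h : (X - C r : ℝ[X]) = X ^ 1 + C (-r) * X ^ 0 := by simp [sub_eq_add_neg]
  rw [h]
  simp only [reflect_add, reflect_C_mul_X_pow, reflect_monomial]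
  norm_num [revAt_le]
  have h1 : (C r : ℝ[X]) ^ 2 = 1 := by rw [← map_pow, hr, map_one]
  linear_combination -h1

lemma quad_dvd_step (N : ℕ) (P : ℝ[X]) (hm : P.Monic) (hd : P.natDegree = 2 * N + 2)
    (hrev : P.reverse = P)
    (hroots : ∀ u : ℂ, (P.map (algebraMap ℝ ℂ)).IsRoot u → u.im ≠ 0 → ‖u‖ = 1) :
    ∃ p : ℝ, (X ^ 2 + C p * X + 1 : ℝ[X]) ∣ P := by
  set f := algebraMap ℝ ℂ with hf
  have hPne : P ≠ 0 := hm.ne_zero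
  have hmapdeg : 0 < (P.map f).degree := by
    rw [← natDegree_pos_iff_degree_pos, hm.natDegree_map, hd]; omega
  obtain ⟨u, hu⟩ := Complex.exists_root hmapdeg
  by_cases him : u.im = 0
  · -- real root r
    set r := u.re with hrdef
    have hur : u = (r : ℂ) := Complex.ext rfl him
    have hPr : P.eval r = 0 := by
      have h0 : f (P.eval r) = 0 := by
        rw [← Polynomial.eval₂_at_apply, ← eval_map]
        rw [hur] at hu; exact hu
      rw [hf] at h0
      rw [show (algebraMap ℝ ℂ) (P.eval r) = ((P.eval r : ℝ) : ℂ) from congrFun Complex.coe_algebraMap _, Complex.ofReal_eq_zero] at h0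
      exact h0
    have hr0 : r ≠ 0 := by
      intro h
      have h0 : P.coeff 0 = 1 := coeff_zero_of_reverse hm hrev
      rw [h, ← coeff_zero_eq_eval_zero, h0] at hPr
      norm_num at hPr
    by_cases hr1 : r ^ 2 = 1
    · -- r = ±1, multiplicity is even
      set m := P.rootMultiplicity r with hmdef
      have hm1 : 1 ≤ m := (rootMultiplicity_pos hPne).mpr hPr
      set Q := P /ₘ (X - C r) ^ m with hQdef
      have hPQ : (X - C r) ^ m * Q = P := pow_mul_divByMonic_rootMultiplicity_eq P r
      have hQr : Q.eval r ≠ 0 := eval_divByMonic_pow_rootMultiplicity_ne_zero r hPne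
      have hQne : Q ≠ 0 := fun h => hQr (by rw [h]; simp)
      have hrinv : r⁻¹ = r := by
        field_simp
        nlinarith [hr1]
      have hpowne : ((X - C r) ^ m : ℝ[X]) ≠ 0 := ((monic_X_sub_C r).pow m).ne_zero
      have hdQ : 2 * N + 2 = m + Q.natDegree := by
        have h1 := natDegree_mul hpowne hQne
        rw [hPQ, hd, natDegree_pow, natDegree_X_sub_C, mul_one] at h1
        exact h1
      have key : Q = C ((-r) ^ m) * reverse Q := by
        have h1 : P.reverse = reverse ((X - C r) ^ m) * reverse Q := by
          rw [← hPQ, reverse_mul_of_domain]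
        rw [reverse_pow', linear_reverse r hr1, mul_pow, ← map_pow, hrev, ← hPQ] at h1
        apply mul_left_cancel₀ hpowne
        rw [h1]; ring
      have e1 : Q.eval r = (-r) ^ m * (reverse Q).eval r := by
        nth_rewrite 1 [key]; simp
      have e2 : (reverse Q).eval r * r ^ Q.natDegree = Q.eval r := by
        have := eval_reverse_mul_pow Q hr0
        rwa [hrinv] at this
      have e3 : r ^ Q.natDegree * Q.eval r = (-r) ^ m * Q.eval r := by
        calc r ^ Q.natDegree * Q.eval r = Q.eval r * r ^ Q.natDegree := by ring
          _ = ((-r) ^ m * (reverse Q).eval r) * r ^ Q.natDegree := by rw [← e1]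
          _ = (-r) ^ m * ((reverse Q).eval r * r ^ Q.natDegree) := by ring
          _ = (-r) ^ m * Q.eval r := by rw [e2]
      have e4 : r ^ Q.natDegree = (-r) ^ m := mul_right_cancel₀ hQr e3
      have hmeven : Even m := by
        have hcases : r = 1 ∨ r = -1 := by
          have : (r - 1) * (r + 1) = 0 := by nlinarith [hr1]
          rcases mul_eq_zero.mp this with h | h
          · left; linarith
          · right; linarith
        rcases hcases with h | h
        · rw [h] at e4
          simp only [one_pow, neg_neg] at e4
          exact (neg_one_pow_eq_one_iff_even (by norm_num : (-1 : ℝ) ≠ 1)).mp e4.symm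
        · rw [h] at e4
          simp only [neg_neg, one_pow] at e4
          have hdev : Even Q.natDegree :=
            (neg_one_pow_eq_one_iff_even (by norm_num : (-1 : ℝ) ≠ 1)).mp e4
          have : Even (2 * N + 2) := ⟨N + 1, by ring⟩
          rw [hdQ] at this
          rcases hdev with ⟨a, ha⟩
          rcases this with ⟨b, hb⟩
          exact ⟨b - a, by omega⟩
      have h2m : 2 ≤ m := by
        rcases hmeven with ⟨a, ha⟩; omega
      have hdvd : ((X - C r) ^ 2 : ℝ[X]) ∣ P :=
        dvd_trans (pow_dvd_pow _ h2m) (pow_rootMultiplicity_dvd P r)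
      refine ⟨-(2 * r), ?_⟩
      have hquad : (X ^ 2 + C (-(2 * r)) * X + 1 : ℝ[X]) = (X - C r) ^ 2 := by
        have h1 : (C r : ℝ[X]) ^ 2 = 1 := by rw [← map_pow, hr1, map_one]
        have h2 : (C (-(2 * r)) : ℝ[X]) = -(2 * C r) := by
          simp only [map_neg, map_mul, map_ofNat]
        rw [h2]
        linear_combination -h1
      rw [hquad]; exact hdvd
    · -- r ≠ ±1 : pair r with r⁻¹
      have hPrinv : P.eval r⁻¹ = 0 := root_inv_of_reverse hrev hr0 hPr
      have hne : r ≠ r⁻¹ := by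
        intro h
        apply hr1
        field_simp at h
        nlinarith [h]
      have hcop : IsCoprime (X - C r : ℝ[X]) (X - C r⁻¹) :=
        isCoprime_X_sub_C_of_isUnit_sub (sub_ne_zero_of_ne (by simpa using hne)).isUnit
      have hdvd : (X - C r) * (X - C r⁻¹) ∣ P :=
        hcop.mul_dvd (dvd_iff_isRoot.mpr hPr) (dvd_iff_isRoot.mpr hPrinv)
      refine ⟨-(r + r⁻¹), ?_⟩
      have hquad : (X ^ 2 + C (-(r + r⁻¹)) * X + 1 : ℝ[X]) = (X - C r) * (X - C r⁻¹) := by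
        have h1 : (C r : ℝ[X]) * C r⁻¹ = 1 := by
          rw [← map_mul, mul_inv_cancel₀ hr0, map_one]
        have h2 : (C (-(r + r⁻¹)) : ℝ[X]) = -(C r + C r⁻¹) := by
          simp [map_neg, map_add]
        rw [h2]
        linear_combination -h1
      rw [hquad]; exact hdvd
  · -- non-real root: conjugate pair on the unit circle
    have habs : ‖u‖ = 1 := hroots u hu him
    have haev : aeval u P = 0 := by rw [aeval_def, ← eval_map]; exact hu
    have hcu : (P.map f).IsRoot (starRingEnd ℂ u) := by
      rw [IsRoot, eval_map, ← aeval_def, Polynomial.aeval_conj, haev, map_zero]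
    have hne : u ≠ starRingEnd ℂ u := by
      intro h
      exact him (Complex.conj_eq_iff_im.mp h.symm)
    have hcop : IsCoprime (X - C u : ℂ[X]) (X - C (starRingEnd ℂ u)) :=
      isCoprime_X_sub_C_of_isUnit_sub (sub_ne_zero_of_ne (by simpa using hne)).isUnit
    have hprod : (X - C u) * (X - C (starRingEnd ℂ u)) ∣ P.map f :=
      hcop.mul_dvd (dvd_iff_isRoot.mpr hu) (dvd_iff_isRoot.mpr hcu)
    refine ⟨-(2 * u.re), ?_⟩
    rw [← Polynomial.map_dvd_map' f]
    have hqmap : ((X ^ 2 + C (-(2 * u.re)) * X + 1 : ℝ[X]).map f)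
        = (X - C u) * (X - C (starRingEnd ℂ u)) := by
      have h1 : (C u : ℂ[X]) * C (starRingEnd ℂ u) = 1 := by
        rw [← map_mul, Complex.mul_conj, Complex.normSq_eq_norm_sq, habs]
        norm_num
      have h2 : (C u : ℂ[X]) + C (starRingEnd ℂ u) = C ((2 * u.re : ℝ) : ℂ) := by
        rw [← map_add, Complex.add_conj]
      simp only [Polynomial.map_add, Polynomial.map_mul, Polynomial.map_pow,
        Polynomial.map_X, Polynomial.map_C, Polynomial.map_one]
      have h3 : (C (f (-(2 * u.re))) : ℂ[X]) = -(C u + C (starRingEnd ℂ u)) := by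
        rw [h2, hf, show (algebraMap ℝ ℂ) (-(2 * u.re)) = ((-(2 * u.re) : ℝ) : ℂ) from
          congrFun Complex.coe_algebraMap _, Complex.ofReal_neg, map_neg]
      linear_combination (X : ℂ[X]) * h3 - h1
    rw [hqmap]
    exact hprod

lemma aux_factor : ∀ N : ℕ, ∀ P : ℝ[X], P.Monic → P.natDegree = 2 * N → P.reverse = P →
    (∀ u : ℂ, (P.map (algebraMap ℝ ℂ)).IsRoot u → u.im ≠ 0 → ‖u‖ = 1) →
    ∃ p : Fin N → ℝ, P = ∏ k : Fin N, (X ^ 2 + C (p k) * X + 1) := by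
  intro N
  induction N with
  | zero =>
    intro P hm hd _ _
    refine ⟨Fin.elim0, ?_⟩
    rw [hm.natDegree_eq_zero.mp hd]
    simp
  | succ N ih =>
    intro P hm hd hrev hroots
    obtain ⟨p₀, hdvd⟩ := quad_dvd_step N P hm (by rw [hd]; ring) hrev hroots
    obtain ⟨Q, hQ⟩ := hdvd
    have hqm := quad_monic p₀
    have hQm : Q.Monic := hqm.of_mul_monic_left (hQ ▸ hm)
    have hQd : Q.natDegree = 2 * N := by
      have h1 := natDegree_mul hqm.ne_zero hQm.ne_zero
      rw [← hQ, hd, quad_natDegree] at h1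
      omega
    have hQrev : Q.reverse = Q := by
      apply mul_left_cancel₀ hqm.ne_zero
      have h1 : P.reverse = reverse (X ^ 2 + C p₀ * X + 1) * reverse Q := by
        rw [hQ, reverse_mul_of_domain]
      rw [hrev, quad_reverse, hQ] at h1
      exact h1.symm
    have hQroots : ∀ u : ℂ, (Q.map (algebraMap ℝ ℂ)).IsRoot u → u.im ≠ 0 →
        ‖u‖ = 1 := by
      intro u hu him
      apply hroots u _ him
      rw [IsRoot, hQ, Polynomial.map_mul, eval_mul, hu, mul_zero]
    obtain ⟨p', hP'⟩ := ih Q hQm hQd hQrev hQroots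
    refine ⟨Fin.cons p₀ p', ?_⟩
    rw [hQ, hP', Fin.prod_univ_succ]
    simp [Fin.cons_zero, Fin.cons_succ]

/-- A monic palindromic real polynomial of degree `2*N` whose non-real complex roots all
have modulus 1 factors into quadratics `x^2 + p k * x + 1` with real coefficients. -/
theorem palindromic_quadratic_factorization (N : ℕ) (hN : 1 ≤ N) (P : Polynomial ℝ)
    (hmonic : P.Monic) (hdeg : P.natDegree = 2 * N)
    (hpal : ∀ j ≤ 2 * N, P.coeff j = P.coeff (2 * N - j))
    (hroots : ∀ u : ℂ, (P.map (algebraMap ℝ ℂ)).IsRoot u → u.im ≠ 0 → ‖u‖ = 1) :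
    ∃ p : Fin N → ℝ, P = ∏ k : Fin N, (X ^ 2 + C (p k) * X + 1) := by
  have hrev : P.reverse = P := by
    ext n
    rw [coeff_reverse]
    by_cases hn : n ≤ P.natDegree
    · rw [revAt_le hn, hdeg]
      exact (hpal n (hdeg ▸ hn)).symm
    · rw [revAt_eq_self_of_lt (Nat.lt_of_not_le hn)]
  exact aux_factor N P hmonic hdeg hrev hroots
end

section
/- Let p : ℝ and let z : ℤ → ℝ be absolutely summable (Σ_{t ∈ ℤ} |z(t)| < ∞) and satisfy z(t−1) + p·z(t) + z(t+1) = δ(t) for all t ∈ ℤ. Let x : ℤ → ℝ be a bounded sequence and define y(t) = x(t−1) + p·x(t) + x(t+1). Then for every t ∈ ℤ, the family k ↦ z(k)·y(t − k) is absolutely summable and Σ_{k ∈ ℤ} z(k)·y(t − k) = x(t). That is, convolving the filtered signal with the inverse filter recovers the original signal. -/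
/-- Convolving the filtered signal `y = [1,p,1] * x` with an absolutely summable inverse
filter `z` of `[1,p,1]` recovers the original bounded signal `x`. -/
theorem inverse_filter_recovers_signal (p : ℝ) (z : ℤ → ℝ)
    (hzsum : Summable (fun t : ℤ => |z t|))
    (hzinv : ∀ t : ℤ, z (t - 1) + p * z t + z (t + 1) = if t = 0 then 1 else 0)
    (x : ℤ → ℝ) (hx : ∃ M : ℝ, ∀ t : ℤ, |x t| ≤ M)
    (y : ℤ → ℝ) (hy : ∀ t : ℤ, y t = x (t - 1) + p * x t + x (t + 1)) :
    ∀ t : ℤ, Summable (fun k : ℤ => |z k * y (t - k)|) ∧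
      (∑' k : ℤ, z k * y (t - k)) = x t := by
  obtain ⟨M, hM⟩ := hx
  have hM0 : 0 ≤ M := le_trans (abs_nonneg _) (hM 0)
  intro t
  -- abstract summability
  have key : ∀ c : ℤ, Summable (fun k : ℤ => |z k * x (c - k)|) := by
    intro c
    apply (hzsum.mul_right M).of_nonneg_of_le (fun k => abs_nonneg _)
    intro k
    rw [abs_mul]
    exact mul_le_mul_of_nonneg_left (hM _) (abs_nonneg _)
  have sf : ∀ c : ℤ, Summable (fun k : ℤ => z k * x (c - k)) :=
    fun c => summable_abs_iff.mp (key c)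
  -- summability of the convolution with y
  have hysum : Summable (fun k : ℤ => |z k * y (t - k)|) := by
    apply (hzsum.mul_right ((2 + |p|) * M)).of_nonneg_of_le (fun k => abs_nonneg _)
    intro k
    rw [abs_mul]
    apply mul_le_mul_of_nonneg_left _ (abs_nonneg _)
    rw [hy]
    calc |x (t - k - 1) + p * x (t - k) + x (t - k + 1)|
        ≤ |x (t - k - 1)| + |p * x (t - k)| + |x (t - k + 1)| := by
          exact (abs_add_le _ _).trans (add_le_add_left (abs_add_le _ _) _)
      _ ≤ M + |p| * M + M := by
          rw [abs_mul]
          exact add_le_add (add_le_add (hM _) (mul_le_mul_of_nonneg_left (hM _) (abs_nonneg _))) (hM _)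
      _ = (2 + |p|) * M := by ring
  refine ⟨hysum, ?_⟩
  -- split the sum
  have split : (fun k : ℤ => z k * y (t - k))
      = fun k : ℤ => z k * x ((t - 1) - k) + p * (z k * x (t - k)) + z k * x ((t + 1) - k) := by
    funext k
    rw [hy]
    have e1 : t - k - 1 = (t - 1) - k := by ring
    have e2 : t - k + 1 = (t + 1) - k := by ring
    rw [e1, e2]; ring
  have s1 : Summable (fun k : ℤ => z k * x ((t - 1) - k)) := sf (t - 1)
  have s2 : Summable (fun k : ℤ => p * (z k * x (t - k))) := (sf t).mul_left p
  have s3 : Summable (fun k : ℤ => z k * x ((t + 1) - k)) := sf (t + 1)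
  rw [split, Summable.tsum_add (s1.add s2) s3, Summable.tsum_add s1 s2]
  -- shift the indices
  have sh1 : (∑' k : ℤ, z k * x ((t - 1) - k)) = ∑' k : ℤ, z (k - 1) * x (t - k) := by
    have := (Equiv.addRight (1 : ℤ)).tsum_eq (fun k : ℤ => z (k - 1) * x (t - k))
    rw [← this]
    apply tsum_congr
    intro k
    simp only [Equiv.coe_addRight]
    congr 1
    · congr 1; ring
    · congr 1; ring
  have sh3 : (∑' k : ℤ, z k * x ((t + 1) - k)) = ∑' k : ℤ, z (k + 1) * x (t - k) := by
    have := (Equiv.subRight (1 : ℤ)).tsum_eq (fun k : ℤ => z (k + 1) * x (t - k))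
    rw [← this]
    apply tsum_congr
    intro k
    simp only [Equiv.subRight_apply]
    congr 1
    · congr 1; ring
    · congr 1; ring
  have sh2 : (∑' k : ℤ, p * (z k * x (t - k))) = ∑' k : ℤ, p * z k * x (t - k) := by
    apply tsum_congr; intro k; ring
  rw [sh1, sh2, sh3]
  have s1' : Summable (fun k : ℤ => z (k - 1) * x (t - k)) := by
    have hc : ((fun k : ℤ => z (k - 1) * x (t - k)) ∘ (Equiv.addRight (1 : ℤ)))
        = fun k : ℤ => z k * x ((t - 1) - k) := by
      funext k
      simp only [Function.comp, Equiv.coe_addRight]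
      congr 1
      · congr 1; ring
      · congr 1; ring
    exact (Equiv.addRight (1 : ℤ)).summable_iff.mp (hc ▸ s1)
  have s3' : Summable (fun k : ℤ => z (k + 1) * x (t - k)) := by
    have hc : ((fun k : ℤ => z (k + 1) * x (t - k)) ∘ (Equiv.subRight (1 : ℤ)))
        = fun k : ℤ => z k * x ((t + 1) - k) := by
      funext k
      simp only [Function.comp, Equiv.subRight_apply]
      congr 1
      · congr 1; ring
      · congr 1; ring
    exact (Equiv.subRight (1 : ℤ)).summable_iff.mp (hc ▸ s3)
  have s2' : Summable (fun k : ℤ => p * z k * x (t - k)) :=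
    s2.congr fun k => by ring
  rw [← Summable.tsum_add s1' s2', ← Summable.tsum_add (s1'.add s2') s3']
  have : (∑' k : ℤ, (z (k - 1) * x (t - k) + p * z k * x (t - k) + z (k + 1) * x (t - k)))
      = ∑' k : ℤ, (if k = 0 then (1 : ℝ) else 0) * x (t - k) := by
    apply tsum_congr
    intro k
    rw [← hzinv k]
    ring
  rw [this, tsum_eq_single 0 (fun k hk => by simp [hk])]
  simp
end

section
/- Let p be a real number with |p| > 2. If z and z' are sequences ℤ → ℝ that both tend to 0 as |t| → ∞ and both satisfy the inverse relation z(t−1) + p·z(t) + z(t+1) = δ(t) for all t ∈ ℤ (and likewise for z'), then z = z'. That is, the decaying inverse of an invertible elementary filter is unique. -/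
/-!
The difference `w = z - z'` solves the homogeneous recurrence `w (t-1) + p w t + w (t+1) = 0`
and tends to `0`, so `|w|` attains its maximum at some `t₀`. This is a discrete maximum
principle: there `|p| |w t₀| ≤ |w (t₀-1)| + |w (t₀+1)| ≤ 2 |w t₀|`, and `|p| > 2` forces
`w t₀ = 0`, hence `w = 0`.
-/

open Filter Topology

theorem exists_forall_norm_le_of_tendsto_cofinite_zero {α E : Type*} [Nonempty α]
    [SeminormedAddGroup E] {f : α → E} (hf : Tendsto f cofinite (𝓝 0)) :
    ∃ a, ∀ b, ‖f b‖ ≤ ‖f a‖ := by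
  by_cases hpos : ∃ a, 0 < ‖f a‖
  · obtain ⟨a₀, ha₀⟩ := hpos
    -- in the discrete topology `cofinite = cocompact`, so the extreme value theorem applies
    let : TopologicalSpace α := ⊥
    have : DiscreteTopology α := ⟨rfl⟩
    refine continuous_of_discreteTopology.exists_forall_ge' a₀ ?_
    rw [cocompact_eq_cofinite]
    exact ((tendsto_norm_zero.comp hf).eventually (gt_mem_nhds ha₀)).mono fun _ => le_of_lt
  · simp only [not_exists, not_lt] at hpos
    exact ⟨Classical.arbitrary α, fun b => (hpos b).trans (norm_nonneg _)⟩

theorem eq_zero_of_tendsto_cofinite_of_add_smul_add_eq_zero {𝕜 E : Type*} [NormedField 𝕜]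
    [NormedAddCommGroup E] [NormedSpace 𝕜 E] {p : 𝕜} (hp : 2 < ‖p‖) {w : ℤ → E}
    (hw0 : Tendsto w cofinite (𝓝 0)) (hw : ∀ t, w (t - 1) + p • w t + w (t + 1) = 0) :
    w = 0 := by
  obtain ⟨t₀, hmax⟩ := exists_forall_norm_le_of_tendsto_cofinite_zero hw0
  have hcentre : p • w t₀ = -(w (t₀ - 1) + w (t₀ + 1)) := by
    rw [eq_neg_iff_add_eq_zero, ← hw t₀]
    abel
  have hbound : ‖p‖ * ‖w t₀‖ ≤ 2 * ‖w t₀‖ :=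
    calc ‖p‖ * ‖w t₀‖ = ‖w (t₀ - 1) + w (t₀ + 1)‖ := by rw [← norm_smul, hcentre, norm_neg]
      _ ≤ ‖w (t₀ - 1)‖ + ‖w (t₀ + 1)‖ := norm_add_le _ _
      _ ≤ 2 * ‖w t₀‖ := by linarith [hmax (t₀ - 1), hmax (t₀ + 1)]
  have hzero : ‖w t₀‖ = 0 := by nlinarith [norm_nonneg (w t₀)]
  funext t
  exact norm_le_zero_iff.1 (hzero ▸ hmax t)

/-- For `|p| > 2`, the decaying inverse of the elementary filter `[1,p,1]` is unique:
two inverses both tending to `0` as `|t| → ∞` coincide. -/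
theorem decaying_inverse_unique (p : ℝ) (hp : |p| > 2) (z z' : ℤ → ℝ)
    (hz0 : Filter.Tendsto z Filter.cofinite (nhds 0))
    (hz'0 : Filter.Tendsto z' Filter.cofinite (nhds 0))
    (hzinv : ∀ t : ℤ, z (t - 1) + p * z t + z (t + 1) = if t = 0 then 1 else 0)
    (hz'inv : ∀ t : ℤ, z' (t - 1) + p * z' t + z' (t + 1) = if t = 0 then 1 else 0) :
    z = z' := by
  have hdiff : ∀ t, (z - z') (t - 1) + p • (z - z') t + (z - z') (t + 1) = 0 := fun t => by
    simp only [Pi.sub_apply, smul_eq_mul]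
    linarith [hzinv t, hz'inv t]
  refine sub_eq_zero.1 (eq_zero_of_tendsto_cofinite_of_add_smul_add_eq_zero ?_ ?_ hdiff)
  · rwa [Real.norm_eq_abs]
  · exact sub_zero (0 : ℝ) ▸ hz0.sub hz'0
end

section
/- Let p be a real number with |p| ≤ 2. Then there is no sequence z : ℤ → ℝ such that z(t) → 0 as |t| → ∞ and z(t−1) + p·z(t) + z(t+1) = δ(t) for all t ∈ ℤ. That is, the elementary symmetric filter [1,p,1] with |p| ≤ 2 has no inverse whose elements converge to zero. -/
/-!
Away from `t = 0` the homogeneous recurrence conserves the quadratic energy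
`E t = z t ^ 2 + z (t + 1) ^ 2 + p * z t * z (t + 1)`, since `E t - E (t - 1)` factors as
`(z (t + 1) - z (t - 1)) * (z (t - 1) + p * z t + z (t + 1))`. So `E` is constant on `t ≥ 0`
and on `t ≤ -1`, and decay of `z` forces both constants to vanish. For `|p| ≤ 2` the form is
positive semidefinite, `4 (x ^ 2 + y ^ 2 + p x y) = (2 x + p y) ^ 2 + (4 - p ^ 2) y ^ 2`, so
`E 0 = E (-1) = 0` gives `2 z 1 + p z 0 = 0 = 2 z (-1) + p z 0`. Adding, twice the left-hand
side of the equation at `t = 0` vanishes, whereas it should equal `2`.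
-/

open Filter Topology

namespace SymmetricFilter

variable {p : ℝ} {z : ℤ → ℝ}

def energy (p : ℝ) (z : ℤ → ℝ) (t : ℤ) : ℝ :=
  z t ^ 2 + z (t + 1) ^ 2 + p * z t * z (t + 1)

theorem energy_eq_energy_sub_one {t : ℤ} (h : z (t - 1) + p * z t + z (t + 1) = 0) :
    energy p z t = energy p z (t - 1) := by
  simp only [energy, sub_add_cancel]
  linear_combination (z (t + 1) - z (t - 1)) * h

theorem tendsto_energy (hz : Tendsto z cofinite (𝓝 0)) :
    Tendsto (energy p z) cofinite (𝓝 0) := by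
  have hz₁ : Tendsto (fun t => z (t + 1)) cofinite (𝓝 0) :=
    hz.comp (add_left_injective 1).tendsto_cofinite
  have h := ((hz.pow 2).add (hz₁.pow 2)).add ((hz.const_mul p).mul hz₁)
  rwa [show (0 : ℝ) ^ 2 + 0 ^ 2 + p * 0 * 0 = 0 by ring] at h

theorem energy_zero_eq_zero (hz : Tendsto z cofinite (𝓝 0))
    (hrec : ∀ t, 0 < t → z (t - 1) + p * z t + z (t + 1) = 0) : energy p z 0 = 0 := by
  have hconst : ∀ t, 0 ≤ t → energy p z t = energy p z 0 := by
    refine Int.leInduction rfl fun t ht ih => ?_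
    rw [← ih, energy_eq_energy_sub_one (hrec (t + 1) (by omega)), add_sub_cancel_right]
  have hE : Tendsto (energy p z) atTop (𝓝 0) :=
    (tendsto_energy hz).mono_left (Int.cofinite_eq ▸ le_sup_right)
  exact tendsto_nhds_unique
    (tendsto_const_nhds.congr' ((eventually_ge_atTop 0).mono fun t ht => (hconst t ht).symm)) hE

theorem energy_neg_one_eq_zero (hz : Tendsto z cofinite (𝓝 0))
    (hrec : ∀ t, t < 0 → z (t - 1) + p * z t + z (t + 1) = 0) : energy p z (-1) = 0 := by
  have hconst : ∀ t, t ≤ -1 → energy p z t = energy p z (-1) := by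
    refine Int.leInductionDown rfl fun t ht ih => ?_
    rw [← ih, energy_eq_energy_sub_one (hrec t (by omega))]
  have hE : Tendsto (energy p z) atBot (𝓝 0) :=
    (tendsto_energy hz).mono_left (Int.cofinite_eq ▸ le_sup_left)
  exact tendsto_nhds_unique
    (tendsto_const_nhds.congr' ((eventually_le_atBot (-1)).mono fun t ht => (hconst t ht).symm)) hE

theorem two_mul_add_mul_eq_zero_of_sq_add_sq_add_mul_eq_zero (hp : |p| ≤ 2) {x y : ℝ}
    (h : x ^ 2 + y ^ 2 + p * x * y = 0) : 2 * x + p * y = 0 := by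
  have hp' : 0 ≤ 4 - p ^ 2 := by nlinarith [abs_nonneg p, sq_abs p]
  have hsum : (2 * x + p * y) ^ 2 + (4 - p ^ 2) * y ^ 2 = 0 := by linear_combination 4 * h
  have hsq := ((add_eq_zero_iff_of_nonneg (sq_nonneg _) (by positivity)).mp hsum).1
  exact pow_eq_zero_iff two_ne_zero |>.mp hsq

end SymmetricFilter

open SymmetricFilter

/-- For `|p| ≤ 2`, the elementary filter `[1,p,1]` has no inverse sequence tending to `0`
as `|t| → ∞`. -/
theorem no_decaying_inverse_of_abs_le_two (p : ℝ) (hp : |p| ≤ 2) :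
    ¬ ∃ z : ℤ → ℝ,
        Filter.Tendsto z Filter.cofinite (nhds 0) ∧
        ∀ t : ℤ, z (t - 1) + p * z t + z (t + 1) = if t = 0 then 1 else 0 := by
  rintro ⟨z, hz, hrec⟩
  have hhom : ∀ t, t ≠ 0 → z (t - 1) + p * z t + z (t + 1) = 0 := fun t ht => by
    simpa [ht] using hrec t
  have hright : 2 * z 1 + p * z 0 = 0 := by
    have h := energy_zero_eq_zero hz fun t ht => hhom t ht.ne'
    simp only [energy, zero_add] at h
    exact two_mul_add_mul_eq_zero_of_sq_add_sq_add_mul_eq_zero hp (by linear_combination h)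
  have hleft : 2 * z (-1) + p * z 0 = 0 := by
    have h := energy_neg_one_eq_zero hz fun t ht => hhom t ht.ne
    norm_num [energy] at h
    exact two_mul_add_mul_eq_zero_of_sq_add_sq_add_mul_eq_zero hp h
  have hzero := hrec 0
  norm_num at hzero
  linarith
end

section
/- Let θ be a real number with 0 < θ < π and set p = −2·cos θ (so |p| < 2). Define the pseudoinverse sequence z : ℤ → ℝ by z(t) = sin(θ·|t|)/(2·sin θ). Then z(t−1) + p·z(t) + z(t+1) = δ(t) for all t ∈ ℤ, and z is bounded: |z(t)| ≤ 1/(2·sin θ) for all t ∈ ℤ. -/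
/-- For `0 < θ < π` and `p = -2 cos θ`, the bounded oscillating sequence
`z t = sin (θ |t|) / (2 sin θ)` is a pseudoinverse of the elementary filter `[1,p,1]`. -/
theorem pseudoinverse_of_non_invertible (θ : ℝ) (hθ0 : 0 < θ) (hθπ : θ < Real.pi)
    (p : ℝ) (hp : p = -2 * Real.cos θ)
    (z : ℤ → ℝ) (hz : ∀ t : ℤ, z t = Real.sin (θ * |(t : ℝ)|) / (2 * Real.sin θ)) :
    (∀ t : ℤ, z (t - 1) + p * z t + z (t + 1) = if t = 0 then 1 else 0) ∧
      ∀ t : ℤ, |z t| ≤ 1 / (2 * Real.sin θ) := by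
  have hs : 0 < Real.sin θ := Real.sin_pos_of_pos_of_lt_pi hθ0 hθπ
  have key : ∀ a : ℝ, Real.sin (a - θ) + Real.sin (a + θ) = 2 * Real.sin a * Real.cos θ := by
    intro a; rw [Real.sin_sub, Real.sin_add]; ring
  constructor
  · intro t
    rcases lt_trichotomy t 0 with ht | ht | ht
    · have ht' : (t : ℝ) ≤ -1 := by exact_mod_cast (by omega : t ≤ -1)
      rw [hz, hz, hz]
      have h1 : |((t - 1 : ℤ) : ℝ)| = -(t : ℝ) + 1 := by
        push_cast; rw [abs_of_nonpos (by linarith)]; ring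
      have h2 : |((t : ℤ) : ℝ)| = -(t : ℝ) := by
        rw [abs_of_nonpos (by linarith)]
      have h3 : |((t + 1 : ℤ) : ℝ)| = -(t : ℝ) - 1 := by
        push_cast; rw [abs_of_nonpos (by linarith)]; ring
      have hne : t ≠ 0 := by omega
      rw [h1, h2, h3, if_neg hne, hp]
      have := key (θ * (-(t : ℝ)))
      have e1 : θ * (-(t : ℝ) + 1) = θ * (-(t : ℝ)) + θ := by ring
      have e2 : θ * (-(t : ℝ) - 1) = θ * (-(t : ℝ)) - θ := by ring
      rw [e1, e2]
      field_simp
      ring_nf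
      have h := key (θ * (-(t : ℝ)))
      ring_nf at h; rw [Real.sin_neg] at h ⊢
      linarith
    · subst ht
      rw [hz, hz, hz]
      norm_num
      field_simp
      ring
    · have ht' : (1 : ℝ) ≤ (t : ℝ) := by exact_mod_cast (by omega : 1 ≤ t)
      rw [hz, hz, hz]
      have h1 : |((t - 1 : ℤ) : ℝ)| = (t : ℝ) - 1 := by
        push_cast; rw [abs_of_nonneg (by linarith)]
      have h2 : |((t : ℤ) : ℝ)| = (t : ℝ) := by
        rw [abs_of_nonneg (by linarith)]
      have h3 : |((t + 1 : ℤ) : ℝ)| = (t : ℝ) + 1 := by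
        push_cast; rw [abs_of_nonneg (by linarith)]
      have hne : t ≠ 0 := by omega
      rw [h1, h2, h3, if_neg hne, hp]
      have e1 : θ * ((t : ℝ) - 1) = θ * (t : ℝ) - θ := by ring
      have e2 : θ * ((t : ℝ) + 1) = θ * (t : ℝ) + θ := by ring
      rw [e1, e2]
      field_simp
      rw [e1, e2]
      linarith [key (θ * (t : ℝ))]
  · intro t
    rw [hz, abs_div, abs_of_pos (by positivity : (0:ℝ) < 2 * Real.sin θ)]
    gcongr
    exact Real.abs_sin_le_one _
end

section
/- Let p₁, p₂ be real numbers and let z₁, z₂ : ℤ → ℝ be absolutely summable sequences such that zᵢ(t−1) + pᵢ·zᵢ(t) + zᵢ(t+1) = δ(t) for all t ∈ ℤ (i = 1, 2). Define w : ℤ → ℝ by w(t) = Σ_{k ∈ ℤ} z₁(k)·z₂(t − k) (the family is absolutely summable for each t). Then w is absolutely summable and is an inverse of the convolution of the two elementary filters: for all t ∈ ℤ, w(t−2) + (p₁ + p₂)·w(t−1) + (p₁·p₂ + 2)·w(t) + (p₁ + p₂)·w(t+1) + w(t+2) = δ(t). -/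
/-- The convolution `w` of the summable inverses `z₁, z₂` of two elementary filters
`[1,p₁,1]` and `[1,p₂,1]` is summable and is an inverse of the convolved filter
`[1, p₁+p₂, p₁p₂+2, p₁+p₂, 1]`. -/
theorem inverse_of_convolved_elementary_filters (p₁ p₂ : ℝ) (z₁ z₂ : ℤ → ℝ)
    (hz₁sum : Summable (fun t : ℤ => |z₁ t|))
    (hz₂sum : Summable (fun t : ℤ => |z₂ t|))
    (hz₁inv : ∀ t : ℤ, z₁ (t - 1) + p₁ * z₁ t + z₁ (t + 1) = if t = 0 then 1 else 0)
    (hz₂inv : ∀ t : ℤ, z₂ (t - 1) + p₂ * z₂ t + z₂ (t + 1) = if t = 0 then 1 else 0)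
    (w : ℤ → ℝ) (hw : ∀ t : ℤ, w t = ∑' k : ℤ, z₁ k * z₂ (t - k)) :
    (∀ t : ℤ, Summable (fun k : ℤ => |z₁ k * z₂ (t - k)|)) ∧
      Summable (fun t : ℤ => |w t|) ∧
      ∀ t : ℤ, w (t - 2) + (p₁ + p₂) * w (t - 1) + (p₁ * p₂ + 2) * w t
          + (p₁ + p₂) * w (t + 1) + w (t + 2) = if t = 0 then 1 else 0 := by
  -- Summability on the product
  have hH : Summable (fun q : ℤ × ℤ => |z₁ q.1 * z₂ q.2|) := by
    have := Summable.mul_norm (f := z₁) (g := z₂) (by simpa using hz₁sum)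
      (by simpa using hz₂sum)
    simpa [abs_mul] using this
  -- re-index
  have hG : Summable (fun q : ℤ × ℤ => |z₁ q.2 * z₂ (q.1 - q.2)|) := by
    have hinj : Function.Injective (fun q : ℤ × ℤ => ((q.2, q.1 - q.2) : ℤ × ℤ)) := by
      intro a b h
      simp only [Prod.mk.injEq, Prod.ext_iff] at h ⊢
      omega
    have := hH.comp_injective hinj
    simpa [Function.comp_def] using this
  have hGnn : 0 ≤ fun q : ℤ × ℤ => |z₁ q.2 * z₂ (q.1 - q.2)| := fun q => abs_nonneg _
  have hGprod := (summable_prod_of_nonneg hGnn).mp hG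
  have part1 : ∀ t : ℤ, Summable (fun k : ℤ => |z₁ k * z₂ (t - k)|) := fun t => hGprod.1 t
  have hS : ∀ t : ℤ, Summable (fun k : ℤ => z₁ k * z₂ (t - k)) := fun t => (part1 t).of_abs
  -- |w t| bounded by the inner tsum of abs
  have part2 : Summable (fun t : ℤ => |w t|) := by
    refine Summable.of_nonneg_of_le (fun t => abs_nonneg _) (fun t => ?_) hGprod.2
    rw [hw t]
    calc |∑' k : ℤ, z₁ k * z₂ (t - k)| = ‖∑' k : ℤ, z₁ k * z₂ (t - k)‖ :=
          (Real.norm_eq_abs _).symm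
      _ ≤ ∑' k : ℤ, ‖z₁ k * z₂ (t - k)‖ := norm_tsum_le_tsum_norm (by simpa only [Real.norm_eq_abs] using part1 t)
      _ = ∑' k : ℤ, |z₁ k * z₂ (t - k)| := by simp only [Real.norm_eq_abs]
  -- key identity: applying the second elementary filter to w gives z₁
  have hA : ∀ s : ℤ, w (s - 1) + p₂ * w s + w (s + 1) = z₁ s := by
    intro s
    rw [hw (s - 1), hw s, hw (s + 1)]
    have h1 : Summable (fun k : ℤ => z₁ k * z₂ (s - 1 - k)) := hS (s - 1)
    have h2 : Summable (fun k : ℤ => p₂ * (z₁ k * z₂ (s - k))) := (hS s).mul_left p₂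
    have h3 : Summable (fun k : ℤ => z₁ k * z₂ (s + 1 - k)) := hS (s + 1)
    rw [← tsum_mul_left, ← Summable.tsum_add h1 h2, ← Summable.tsum_add (h1.add h2) h3]
    have : (fun k : ℤ => z₁ k * z₂ (s - 1 - k) + p₂ * (z₁ k * z₂ (s - k))
        + z₁ k * z₂ (s + 1 - k))
        = fun k : ℤ => z₁ k * (if s - k = 0 then 1 else 0) := by
      funext k
      have h := hz₂inv (s - k)
      have e1 : s - 1 - k = s - k - 1 := by ring
      have e2 : s + 1 - k = s - k + 1 := by ring
      rw [e1, e2]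
      linear_combination z₁ k * h
    rw [this, tsum_eq_single s (by intro k hk; simp [sub_eq_zero, (Ne.symm hk)])]
    simp
  refine ⟨part1, part2, fun t => ?_⟩
  have hA1 := hA (t - 1)
  have hA2 := hA t
  have hA3 := hA (t + 1)
  have e1 : t - 1 - 1 = t - 2 := by ring
  have e2 : t - 1 + 1 = t := by ring
  have e3 : t + 1 - 1 = t := by ring
  have e4 : t + 1 + 1 = t + 2 := by ring
  rw [e1, e2] at hA1
  rw [e3, e4] at hA3
  have h1 := hz₁inv t
  linear_combination hA1 + p₁ * hA2 + hA3 + h1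
end
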